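/- The group Γ is torsion-free: every non-identity element of Γ has infinite order. -/

import Mathlib

namespace PinkGroup

mutual
  /-- forward action of the generator `a` -/
  def aF : List Bool → List Bool
    | [] => []
    | false :: w => true :: bF w
    | true :: w => false :: w
  /-- forward action of the generator `b` -/
  def bF : List Bool → List Bool
    | [] => []
    | false :: w => false :: aF w
    | true :: w => true :: w
end

mutual
  /-- inverse of `aF` -/
  def aIF : List Bool → List Bool
    | [] => []
    | true :: w => false :: bIF w
    | false :: w => true :: w
  /-- inverse of `bF` -/
  def bIF : List Bool → List Bool
    | [] => []
    | false :: w => false :: aIF w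
    | true :: w => true :: w
end

lemma inv_all (w : List Bool) :
    aF (aIF w) = w ∧ bF (bIF w) = w ∧ aIF (aF w) = w ∧ bIF (bF w) = w := by
  induction w with
  | nil => simp [aF, bF, aIF, bIF]
  | cons x w ih =>
    cases x <;>
      simp [aF, bF, aIF, bIF, ih.1, ih.2.1, ih.2.2.1, ih.2.2.2]

/-- The generator `a` of Pink's group: `(1w)^a = 2 w^b`, `(2w)^a = 1w`
(where the letter `1` is `false` and the letter `2` is `true`). -/
def a : Equiv.Perm (List Bool) :=
  ⟨aF, aIF, fun w => (inv_all w).2.2.1, fun w => (inv_all w).1⟩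

/-- The generator `b` of Pink's group: `(1w)^b = 1 w^a`, `(2w)^b = 2w`. -/
def b : Equiv.Perm (List Bool) :=
  ⟨bF, bIF, fun w => (inv_all w).2.2.2, fun w => (inv_all w).2.1⟩

/-- Pink's group `Γ`, the iterated monodromy group of `z^2 - 1`. -/
def Gam : Subgroup (Equiv.Perm (List Bool)) := Subgroup.closure {a, b}

lemma a_mem : a ∈ Gam := Subgroup.subset_closure (by simp)

lemma b_mem : b ∈ Gam := Subgroup.subset_closure (by simp)


/-! If `g ∈ Γ` is active, i.e. swaps the two subtrees, then `g ^ n = 1` forces `n = 2 * m`, and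
`g ^ 2` has the section `u = g|₂ g|₁` with `u ^ m = 1`, hence `u = 1` by strong induction on `n`.
That is impossible: the parity of the number of `b`-letters of a word is the sum of the
`a`-parities of its sections, hence vanishes on `1`, while for `u` it equals the `a`-parity of `g`.
So an element of finite order is inactive, its sections have the same finite order, and descending
the tree shows that it fixes every vertex. -/

inductive Letter
  | A | A' | B | B'

open Letter

def gen : Letter → Equiv.Perm (List Bool)
  | A => a
  | A' => a⁻¹
  | B => b
  | B' => b⁻¹

/-- Products of permutations compose to the left, so the last letter of `w` acts first. -/
def ev (w : List Letter) : Equiv.Perm (List Bool) := (w.map gen).prod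

def isA : Letter → Bool
  | A | A' => true
  | B | B' => false

def aParity : List Letter → Bool
  | [] => false
  | x :: w => xor (isA x) (aParity w)

def bParity : List Letter → Bool
  | [] => false
  | x :: w => xor (!isA x) (bParity w)

/-- `secL x d` is a word for the section of `gen x` at the vertex `d`. -/
def secL : Letter → Bool → List Letter
  | A, false => [B]
  | A, true => []
  | A', false => []
  | A', true => [B']
  | B, false => [A]
  | B, true => []
  | B', false => [A']
  | B', true => []

def sec (c : Bool) : List Letter → List Letter
  | [] => []
  | x :: w => secL x (xor (aParity w) c) ++ sec c w

def wordPow (w : List Letter) : ℕ → List Letter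
  | 0 => []
  | n + 1 => w ++ wordPow w n

@[simp] lemma ev_nil : ev [] = 1 := rfl

lemma ev_cons (x : Letter) (w : List Letter) : ev (x :: w) = gen x * ev w := by
  simp [ev]

lemma ev_append (u v : List Letter) : ev (u ++ v) = ev u * ev v := by
  simp [ev]

lemma ev_wordPow (w : List Letter) (n : ℕ) : ev (wordPow w n) = ev w ^ n := by
  induction n with
  | zero => rfl
  | succ n ih => rw [wordPow, ev_append, ih, pow_succ']

lemma range_gen : Set.range gen = {a, b} ∪ {a, b}⁻¹ := by
  ext g
  simp only [Set.mem_range, Set.mem_union, Set.mem_insert_iff, Set.mem_singleton_iff,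
    Set.inv_insert, Set.inv_singleton]
  constructor
  · rintro ⟨x, rfl⟩
    cases x <;> simp [gen]
  · rintro ((rfl | rfl) | (h | h))
    exacts [⟨A, rfl⟩, ⟨B, rfl⟩, ⟨A', by rw [h]; rfl⟩, ⟨B', by rw [h]; rfl⟩]

lemma exists_ev_eq {g : Equiv.Perm (List Bool)} (hg : g ∈ Gam) : ∃ w, ev w = g := by
  have hg' : g ∈ MonoidHom.mrange (FreeMonoid.lift gen) := by
    rw [FreeMonoid.mrange_lift, range_gen, ← Subgroup.closure_toSubmonoid]
    exact hg
  obtain ⟨w, rfl⟩ := hg'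
  exact ⟨w.toList, (FreeMonoid.lift_apply gen w).symm⟩

lemma aParity_append (u v : List Letter) :
    aParity (u ++ v) = xor (aParity u) (aParity v) := by
  induction u with
  | nil => simp [aParity]
  | cons x u ih => simp [aParity, ih]

lemma bParity_append (u v : List Letter) :
    bParity (u ++ v) = xor (bParity u) (bParity v) := by
  induction u with
  | nil => simp [bParity]
  | cons x u ih => simp [bParity, ih]

lemma aParity_wordPow (w : List Letter) (n : ℕ) :
    aParity (wordPow w n) = (aParity w && decide (Odd n)) := by
  induction n with
  | zero => simp [wordPow, aParity]
  | succ n ih =>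
    rw [wordPow, aParity_append, ih]
    cases aParity w <;> simp [Nat.odd_add_one, ← Nat.not_even_iff_odd]

@[simp] lemma ev_apply_nil (w : List Letter) : ev w [] = [] := by
  induction w with
  | nil => rfl
  | cons x w ih =>
    rw [ev_cons, Equiv.Perm.mul_apply, ih]
    cases x <;> rfl

lemma gen_apply_cons (x : Letter) (d : Bool) (u : List Bool) :
    gen x (d :: u) = xor (isA x) d :: ev (secL x d) u := by
  cases x <;> cases d <;> rfl

lemma ev_apply_cons (w : List Letter) (c : Bool) (u : List Bool) :
    ev w (c :: u) = xor (aParity w) c :: ev (sec c w) u := by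
  induction w with
  | nil => simp [aParity, sec]
  | cons x w ih =>
    rw [ev_cons, Equiv.Perm.mul_apply, ih, gen_apply_cons, sec, ev_append,
      Equiv.Perm.mul_apply, aParity, Bool.xor_assoc]

lemma sec_append (c : Bool) (u v : List Letter) :
    sec c (u ++ v) = sec (xor (aParity v) c) u ++ sec c v := by
  induction u with
  | nil => rfl
  | cons x u ih =>
    rw [List.cons_append, sec, ih, sec, aParity_append, List.append_assoc, Bool.xor_assoc]

lemma sec_wordPow {w : List Letter} (hw : aParity w = false) (c : Bool) (n : ℕ) :
    sec c (wordPow w n) = wordPow (sec c w) n := by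
  induction n with
  | zero => rfl
  | succ n ih => rw [wordPow, sec_append, ih, aParity_wordPow, hw, Bool.false_and,
      Bool.false_xor, wordPow]

lemma aParity_sec (w : List Letter) :
    xor (aParity (sec false w)) (aParity (sec true w)) = bParity w := by
  induction w with
  | nil => rfl
  | cons x w ih =>
    rw [sec, sec, aParity_append, aParity_append, bParity, ← ih]
    generalize aParity (sec false w) = p
    generalize aParity (sec true w) = q
    cases x <;> cases aParity w <;> cases p <;> cases q <;> rfl

lemma bParity_sec (w : List Letter) :
    xor (bParity (sec false w)) (bParity (sec true w)) = aParity w := by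
  induction w with
  | nil => rfl
  | cons x w ih =>
    rw [sec, sec, bParity_append, bParity_append, aParity, ← ih]
    generalize bParity (sec false w) = p
    generalize bParity (sec true w) = q
    cases x <;> cases p <;> cases q <;> rfl

lemma aParity_eq_false_of_ev_eq_one {w : List Letter} (h : ev w = 1) : aParity w = false := by
  simpa [h] using (ev_apply_cons w false []).symm

lemma ev_sec_eq_one_of_ev_eq_one {w : List Letter} (h : ev w = 1) (c : Bool) :
    ev (sec c w) = 1 := by
  ext u : 1
  simpa [h, aParity_eq_false_of_ev_eq_one h] using (ev_apply_cons w c u).symm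

lemma bParity_eq_false_of_ev_eq_one {w : List Letter} (h : ev w = 1) : bParity w = false := by
  rw [← aParity_sec, aParity_eq_false_of_ev_eq_one (ev_sec_eq_one_of_ev_eq_one h false),
    aParity_eq_false_of_ev_eq_one (ev_sec_eq_one_of_ev_eq_one h true)]
  rfl

lemma ev_sec_pow_eq_one {w : List Letter} (hw : aParity w = false) {n : ℕ} (h : ev w ^ n = 1)
    (c : Bool) : ev (sec c w) ^ n = 1 := by
  rw [← ev_wordPow, ← sec_wordPow hw]
  exact ev_sec_eq_one_of_ev_eq_one (by rwa [ev_wordPow]) c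

lemma aParity_eq_false_of_ev_pow_eq_one {n : ℕ} (hn : n ≠ 0)
    (ih : ∀ m < n, m ≠ 0 → ∀ {v : List Letter}, ev v ^ m = 1 → ev v = 1)
    {w : List Letter} (h : ev w ^ n = 1) : aParity w = false := by
  by_contra hact
  rw [Bool.not_eq_false] at hact
  rcases Nat.even_or_odd n with ⟨m, rfl⟩ | hodd
  · have hww : aParity (w ++ w) = false := by rw [aParity_append, hact]; rfl
    have hu : sec false (w ++ w) = sec true w ++ sec false w := by
      rw [sec_append, hact]; rfl
    have hupow : ev (sec true w ++ sec false w) ^ m = 1 := by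
      rw [← hu]
      refine ev_sec_pow_eq_one hww ?_ false
      rw [ev_append, ← pow_two, ← pow_mul, two_mul, h]
    have hu1 := ih m (by omega) (by omega) hupow
    have := bParity_eq_false_of_ev_eq_one hu1
    rw [bParity_append, Bool.xor_comm, bParity_sec, hact] at this
    cases this
  · have := aParity_eq_false_of_ev_eq_one (w := wordPow w n) (by rw [ev_wordPow, h])
    simp [aParity_wordPow, hact, hodd] at this

theorem ev_eq_one_of_ev_pow_eq_one {n : ℕ} (hn : n ≠ 0) {w : List Letter} (hw : ev w ^ n = 1) :
    ev w = 1 := by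
  induction n using Nat.strong_induction_on generalizing w with
  | _ n ih =>
    have inactive : ∀ v, ev v ^ n = 1 → aParity v = false := fun _ =>
      aParity_eq_false_of_ev_pow_eq_one hn ih
    suffices ∀ u (v : List Letter), ev v ^ n = 1 → ev v u = u from
      Equiv.ext fun u => this u w hw
    intro u
    induction u with
    | nil => simp
    | cons c u ihu =>
      intro v hv
      rw [ev_apply_cons, inactive v hv, ihu _ (ev_sec_pow_eq_one (inactive v hv) hv c),
        Bool.false_xor]

/-- The group `Γ` is torsion-free: every non-identity element of `Γ`
has infinite order. -/
theorem Gam_torsion_free :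
    ∀ g ∈ Gam, g ≠ 1 → ∀ n : ℕ, g ^ n = 1 → n = 0 := by
  intro g hg hne n hpow
  by_contra hn
  obtain ⟨w, rfl⟩ := exists_ev_eq hg
  exact hne (ev_eq_one_of_ev_pow_eq_one hn hpow)

end PinkGroup
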